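/- Let ξ : ℝ^d → ℝ be a smooth even kernel with compact support and let F̄ : 𝕋^d × ℝ → ℝ be smooth with c ≤ ∂F̄/∂z ≤ 1/c for some c > 0. Define F(x,m) = ((F̄(·, (m⋆ξ)(·))) ⋆ ξ)(x) for probability measures m on 𝕋^d. Then for all probability measures m₁, m₂ on 𝕋^d: ∫_{𝕋^d} (F(x,m₁) − F(x,m₂)) d(m₁ − m₂)(x) ≥ c ∫_{𝕋^d} ((m₁⋆ξ)(x) − (m₂⋆ξ)(x))² dx. -/

import Mathlib

open MeasureTheory

noncomputable section

/-- The flat torus `𝕋^d = ℝ^d/ℤ^d`. -/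
abbrev Torus (d : ℕ) := Fin d → AddCircle (1 : ℝ)

/-- Convolution `m ⋆ ξ` of a measure `m` on the torus with a kernel `ξ`. -/
def measConv {d : ℕ} (m : Measure (Torus d)) (ξ : Torus d → ℝ) (x : Torus d) : ℝ :=
  ∫ y, ξ (x - y) ∂m

/-- The coupling `F(x, m) = (F̄(·, (m⋆ξ)(·)) ⋆ ξ)(x)`. -/
def coupling {d : ℕ} (ξ : Torus d → ℝ) (Fb : Torus d → ℝ → ℝ)
    (m : Measure (Torus d)) (x : Torus d) : ℝ :=
  ∫ y, Fb y (measConv m ξ y) * ξ (x - y)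

/-!
Write `uᵢ = mᵢ ⋆ ξ` and `g(y) = F̄(y, u₁(y)) − F̄(y, u₂(y))`. Then `F(·, m₁) − F(·, m₂) = g ⋆ ξ`,
and since `ξ` is even, Fubini moves the convolution onto the measure:
`∫ (g ⋆ ξ) dmᵢ = ∫ g uᵢ`. Hence the left-hand side equals `∫ g (u₁ − u₂)`, and pointwise
`g (u₁ − u₂) ≥ c (u₁ − u₂)²` because `z ↦ F̄(y, z) − c z` is nondecreasing.
-/

theorem Continuous.integrable_of_compactSpace {α E : Type*} [TopologicalSpace α] [CompactSpace α]
    [MeasurableSpace α] [OpensMeasurableSpace α] [NormedAddCommGroup E] {f : α → E}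
    (hf : Continuous f) (μ : Measure α) [IsFiniteMeasure μ] : Integrable f μ :=
  hf.integrable_of_hasCompactSupport (HasCompactSupport.of_compactSpace f)

theorem mul_sub_le_sub_of_le_hasDerivAt {c : ℝ} {f f' : ℝ → ℝ}
    (hf : ∀ z, HasDerivAt f (f' z) z) (hc : ∀ z, c ≤ f' z) {a b : ℝ} (hba : b ≤ a) :
    c * (a - b) ≤ f a - f b := by
  have hmono : Monotone fun w => f w - c * w :=
    monotone_of_hasDerivAt_nonneg (fun z =>
      ((hf z).fun_sub ((hasDerivAt_id' z).const_mul c)).congr_deriv (by ring))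
      fun z => sub_nonneg.mpr (hc z)
  linarith [hmono hba]

theorem mul_sq_sub_le_of_le_hasDerivAt {c : ℝ} {f f' : ℝ → ℝ}
    (hf : ∀ z, HasDerivAt f (f' z) z) (hc : ∀ z, c ≤ f' z) (a b : ℝ) :
    c * (a - b) ^ 2 ≤ (f a - f b) * (a - b) := by
  rcases le_total b a with hba | hab
  · nlinarith [mul_sub_le_sub_of_le_hasDerivAt hf hc hba]
  · nlinarith [mul_sub_le_sub_of_le_hasDerivAt hf hc hab]

section Torus

variable {d : ℕ} {ξ : Torus d → ℝ}

theorem continuous_measConv (m : Measure (Torus d)) [IsFiniteMeasure m] (hξ : Continuous ξ) :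
    Continuous (measConv m ξ) := by
  unfold measConv
  simpa using continuous_parametric_integral_of_continuous (μ := m)
    (f := fun x y => ξ (x - y)) (by fun_prop) isCompact_univ

theorem integral_conv_eq_integral_mul_measConv (hξ : Continuous ξ)
    (hξeven : ∀ x, ξ (-x) = ξ x) {g : Torus d → ℝ} (hg : Continuous g)
    (m : Measure (Torus d)) [IsFiniteMeasure m] :
    ∫ x, (∫ y, g y * ξ (x - y)) ∂m = ∫ y, g y * measConv m ξ y := by
  rw [integral_integral_swap ((by fun_prop : Continuous fun p : Torus d × Torus d =>
    g p.2 * ξ (p.1 - p.2)).integrable_of_compactSpace _)]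
  refine integral_congr_ae (ae_of_all _ fun y => ?_)
  dsimp only
  rw [integral_const_mul, measConv]
  congr 1
  exact integral_congr_ae (ae_of_all _ fun x => by dsimp only; rw [← hξeven, neg_sub])

theorem coupling_sub_coupling (hξ : Continuous ξ) {Fb : Torus d → ℝ → ℝ}
    (hFb : Continuous fun p : Torus d × ℝ => Fb p.1 p.2)
    (m₁ m₂ : Measure (Torus d)) [IsFiniteMeasure m₁] [IsFiniteMeasure m₂] (x : Torus d) :
    coupling ξ Fb m₁ x - coupling ξ Fb m₂ x =
      ∫ y, (Fb y (measConv m₁ ξ y) - Fb y (measConv m₂ ξ y)) * ξ (x - y) := by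
  have hu₁ := continuous_measConv m₁ hξ
  have hu₂ := continuous_measConv m₂ hξ
  have hcont : ∀ u : Torus d → ℝ, Continuous u → Continuous fun y => Fb y (u y) * ξ (x - y) :=
    fun u hu => (hFb.comp (continuous_id.prodMk hu)).mul (by fun_prop)
  rw [coupling, coupling, ← integral_sub ((hcont _ hu₁).integrable_of_compactSpace _)
    ((hcont _ hu₂).integrable_of_compactSpace _)]
  simp only [sub_mul]

end Torus

theorem statement0_general {d : ℕ} (c : ℝ)
    (ξ : Torus d → ℝ) (hξcont : Continuous ξ) (hξeven : ∀ x, ξ (-x) = ξ x)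
    (Fb : Torus d → ℝ → ℝ) (Fb' : Torus d → ℝ → ℝ)
    (hFbcont : Continuous fun p : Torus d × ℝ => Fb p.1 p.2)
    (hFbderiv : ∀ x z, HasDerivAt (fun w => Fb x w) (Fb' x z) z)
    (hlow : ∀ x z, c ≤ Fb' x z)
    (m₁ m₂ : Measure (Torus d))
    [IsProbabilityMeasure m₁] [IsProbabilityMeasure m₂] :
    (∫ x, (coupling ξ Fb m₁ x - coupling ξ Fb m₂ x) ∂m₁)
        - ∫ x, (coupling ξ Fb m₁ x - coupling ξ Fb m₂ x) ∂m₂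
      ≥ c * ∫ x, (measConv m₁ ξ x - measConv m₂ ξ x) ^ 2 := by
  have hu₁ := continuous_measConv m₁ hξcont
  have hu₂ := continuous_measConv m₂ hξcont
  have hg : Continuous fun y => Fb y (measConv m₁ ξ y) - Fb y (measConv m₂ ξ y) :=
    (hFbcont.comp (continuous_id.prodMk hu₁)).sub (hFbcont.comp (continuous_id.prodMk hu₂))
  simp_rw [coupling_sub_coupling hξcont hFbcont m₁ m₂,
    integral_conv_eq_integral_mul_measConv hξcont hξeven hg]
  rw [ge_iff_le, ← integral_sub, ← integral_const_mul]
  · refine integral_mono ?_ ?_ fun y => ?_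
    · exact Continuous.integrable_of_compactSpace (by fun_prop) _
    · exact Continuous.integrable_of_compactSpace (by fun_prop) _
    · exact (mul_sq_sub_le_of_le_hasDerivAt (hFbderiv y) (hlow y) _ _).trans_eq (mul_sub _ _ _)
  all_goals exact Continuous.integrable_of_compactSpace (by fun_prop) _

/-- lower bound
`∫ (F(x,m₁) − F(x,m₂)) d(m₁−m₂) ≥ c ∫ ((m₁⋆ξ)(x) − (m₂⋆ξ)(x))² dx`. -/
theorem statement0 {d : ℕ} (c : ℝ) (hc : 0 < c)
    (ξ : Torus d → ℝ) (hξcont : Continuous ξ) (hξeven : ∀ x, ξ (-x) = ξ x)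
    (Fb : Torus d → ℝ → ℝ) (Fb' : Torus d → ℝ → ℝ)
    (hFbcont : Continuous fun p : Torus d × ℝ => Fb p.1 p.2)
    (hFbderiv : ∀ x z, HasDerivAt (fun w => Fb x w) (Fb' x z) z)
    (hlow : ∀ x z, c ≤ Fb' x z) (hup : ∀ x z, Fb' x z ≤ 1 / c)
    (m₁ m₂ : Measure (Torus d))
    [IsProbabilityMeasure m₁] [IsProbabilityMeasure m₂] :
    (∫ x, (coupling ξ Fb m₁ x - coupling ξ Fb m₂ x) ∂m₁)
        - ∫ x, (coupling ξ Fb m₁ x - coupling ξ Fb m₂ x) ∂m₂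
      ≥ c * ∫ x, (measConv m₁ ξ x - measConv m₂ ξ x) ^ 2 :=
  statement0_general c ξ hξcont hξeven Fb Fb' hFbcont hFbderiv hlow m₁ m₂
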